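/- Let f be a Boolean function depending on all n of its variables, computed by a DNF with f(0^n) = 0, non-redundant terms, and pairwise disjoint positive-variable sets (block property). Then s(f) ≥ n^{1/3} / 2. -/

import Mathlib

open Finset

variable {ι : Type*} [Fintype ι] [DecidableEq ι]

/-- Flip one coordinate of a Boolean input. -/
def bflip (x : ι → Bool) (i : ι) : ι → Bool := Function.update x i (!x i)

/-- Flip a block (set) of coordinates of a Boolean input. -/
def bflipS (x : ι → Bool) (B : Finset ι) : ι → Bool := fun j => if j ∈ B then !x j else x j

/-- Sensitivity of `f` at `x`. -/
def sensAt (f : (ι → Bool) → Bool) (x : ι → Bool) : ℕ :=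
  (univ.filter fun i => f (bflip x i) ≠ f x).card

/-- Sensitivity of `f`. -/
def sens (f : (ι → Bool) → Bool) : ℕ := univ.sup (sensAt f)

/-- 0-sensitivity of `f`. -/
def sens0 (f : (ι → Bool) → Bool) : ℕ := (univ.filter fun x => f x = false).sup (sensAt f)

/-- 1-sensitivity of `f`. -/
def sens1 (f : (ι → Bool) → Bool) : ℕ := (univ.filter fun x => f x = true).sup (sensAt f)

/-- Block sensitivity of `f` at `x`: the largest number of pairwise disjoint
sensitive blocks. -/
noncomputable def bsAt (f : (ι → Bool) → Bool) (x : ι → Bool) : ℕ :=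
  sSup {k | ∃ B : Fin k → Finset ι, (∀ i j, i ≠ j → Disjoint (B i) (B j)) ∧
    ∀ j, f (bflipS x (B j)) ≠ f x}

/-- Block sensitivity of `f`. -/
noncomputable def bs (f : (ι → Bool) → Bool) : ℕ := univ.sup (bsAt f)

/-- 0-block sensitivity of `f`. -/
noncomputable def bs0 (f : (ι → Bool) → Bool) : ℕ := (univ.filter fun x => f x = false).sup (bsAt f)

/-- A DNF term, given by its positive variable set `t.1` and negative variable
set `t.2`, is true on `x`. -/
def TermTrue {n : ℕ} (t : Finset (Fin n) × Finset (Fin n)) (x : Fin n → Bool) : Prop :=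
  (∀ j ∈ t.1, x j = true) ∧ (∀ j ∈ t.2, x j = false)

/-!
Write `s` for the sensitivity and `d` for the largest width of a term. Every variable occurs in
some term, so `n ≤ w d`.
Every term has width at most `2 s`: at the indicator of its positive block each positive literal
is sensitive, and each negative literal is sensitive either there or at `0`.
Say term `i` conflicts with term `j` when a negative literal of `i` lies in the block of `j`;
each term conflicts with at most `d - 1` others, so a greedy choice yields `w / (2d - 1)` pairwise
non-conflicting terms. Deleting one variable from each of their blocks gives an input at which
all of them are sensitive. Hence `n ≤ w d ≤ (2d - 1) s d ≤ 8 s³`.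
-/

section Indicator

variable {α : Type*} [DecidableEq α]

def boolIndicator (S : Finset α) : α → Bool := fun k => decide (k ∈ S)

lemma boolIndicator_empty : boolIndicator (∅ : Finset α) = fun _ => false := by
  funext k; simp [boolIndicator]

lemma bflip_boolIndicator_of_mem {S : Finset α} {k : α} (hk : k ∈ S) :
    bflip (boolIndicator S) k = boolIndicator (S.erase k) := by
  funext j
  by_cases hj : j = k
  · subst hj; simp [bflip, boolIndicator, hk]
  · simp [bflip, boolIndicator, hj]

lemma bflip_boolIndicator_of_notMem {S : Finset α} {k : α} (hk : k ∉ S) :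
    bflip (boolIndicator S) k = boolIndicator (insert k S) := by
  funext j
  by_cases hj : j = k
  · subst hj; simp [bflip, boolIndicator, hk]
  · simp [bflip, boolIndicator, hj]

end Indicator

lemma termTrue_boolIndicator_iff {n : ℕ} {t : Finset (Fin n) × Finset (Fin n)}
    {S : Finset (Fin n)} : TermTrue t (boolIndicator S) ↔ t.1 ⊆ S ∧ Disjoint t.2 S := by
  simp [TermTrue, boolIndicator, Finset.subset_iff, Finset.disjoint_left]

lemma termTrue_congr {n : ℕ} {t : Finset (Fin n) × Finset (Fin n)} {x y : Fin n → Bool}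
    (h : ∀ j ∈ t.1 ∪ t.2, x j = y j) : TermTrue t x ↔ TermTrue t y := by
  simp only [TermTrue, Finset.mem_union] at h ⊢
  constructor
  · rintro ⟨hpos, hneg⟩
    exact ⟨fun j hj => h j (.inl hj) ▸ hpos j hj, fun j hj => h j (.inr hj) ▸ hneg j hj⟩
  · rintro ⟨hpos, hneg⟩
    exact ⟨fun j hj => (h j (.inl hj)).symm ▸ hpos j hj,
      fun j hj => (h j (.inr hj)).symm ▸ hneg j hj⟩

section Sensitivity

variable {α : Type*} [Fintype α] [DecidableEq α]

lemma card_le_sensAt {f : (α → Bool) → Bool} {x : α → Bool} {S : Finset α}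
    (h : ∀ k ∈ S, f (bflip x k) ≠ f x) : #S ≤ sensAt f x :=
  card_le_card fun k hk => mem_filter.2 ⟨mem_univ k, h k hk⟩

lemma sensAt_le_sens (f : (α → Bool) → Bool) (x : α → Bool) : sensAt f x ≤ sens f :=
  le_sup (mem_univ x)

end Sensitivity

section IndependentSet

variable {α : Type*} [DecidableEq α] (E : α → α → Prop) [DecidableRel E]

lemma exists_mem_card_filter_adj_le {V : Finset α} (hV : V.Nonempty) {k : ℕ}
    (hout : ∀ v, #{u ∈ V | E v u} ≤ k) : ∃ v ∈ V, #{u ∈ V | E v u ∨ E u v} ≤ 2 * k := by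
  have hin : ∑ v ∈ V, #{u ∈ V | E u v} = ∑ v ∈ V, #{u ∈ V | E v u} := by
    simp only [card_filter]
    exact sum_comm
  refine exists_le_of_sum_le hV ?_
  calc ∑ v ∈ V, #{u ∈ V | E v u ∨ E u v}
      ≤ ∑ v ∈ V, (#{u ∈ V | E v u} + #{u ∈ V | E u v}) :=
        sum_le_sum fun v _ => (card_le_card (filter_or _ _ _).le).trans (card_union_le _ _)
    _ = 2 * ∑ v ∈ V, #{u ∈ V | E v u} := by rw [sum_add_distrib, hin, two_mul]
    _ ≤ ∑ _v ∈ V, 2 * k := by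
        rw [← mul_sum]
        exact Nat.mul_le_mul_left 2 (sum_le_sum fun v _ => hout v)

/-- Greedy (Turán-type) bound: keep a vertex with at most `2 * k` neighbours, which exists since
the average degree is at most `2 * k`, discard those neighbours and recurse. -/
theorem exists_indep_card_le_mul {k : ℕ} (V : Finset α) (hout : ∀ v, #{u ∈ V | E v u} ≤ k) :
    ∃ M ⊆ V, (∀ i ∈ M, ∀ j ∈ M, i ≠ j → ¬ E i j) ∧ #V ≤ (2 * k + 1) * #M := by
  induction V using Finset.strongInduction with
  | H V ih =>
  rcases V.eq_empty_or_nonempty with rfl | hV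
  · exact ⟨∅, empty_subset _, by simp, by simp⟩
  obtain ⟨v, hvV, hv⟩ := exists_mem_card_filter_adj_le E hV hout
  set N := insert v {u ∈ V | E v u ∨ E u v}
  have hNV : N ⊆ V := insert_subset hvV (filter_subset _ _)
  have hsub : V \ N ⊂ V := sdiff_ssubset hNV (insert_nonempty _ _)
  obtain ⟨M, hMV, hMind, hcard⟩ := ih _ hsub fun u =>
    (card_le_card (filter_subset_filter _ sdiff_subset)).trans (hout u)
  have hvM : ∀ u ∈ M, u ≠ v ∧ ¬ E v u ∧ ¬ E u v := by
    intro u hu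
    obtain ⟨huV, huN⟩ := mem_sdiff.1 (hMV hu)
    simp only [N, mem_insert, mem_filter, not_or, not_and] at huN
    exact ⟨huN.1, huN.2 huV⟩
  refine ⟨insert v M, insert_subset hvV (hMV.trans sdiff_subset), ?_, ?_⟩
  · simp only [mem_insert]
    rintro i (rfl | hi) j (rfl | hj) hij
    · exact absurd rfl hij
    · exact (hvM j hj).2.1
    · exact (hvM i hi).2.2
    · exact hMind i hi j hj hij
  · have hN : #N ≤ 2 * k + 1 := (card_insert_le _ _).trans (Nat.succ_le_succ hv)
    rw [card_insert_of_notMem fun h => (hvM v h).1 rfl, mul_add_one]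
    calc #V ≤ #(V \ N) + #N := card_le_card_sdiff_add_card
      _ ≤ _ := add_le_add hcard hN

end IndependentSet

lemma card_filter_not_disjoint_le {ι β : Type*} [DecidableEq β] {P : ι → Finset β}
    (hP : ∀ i j, i ≠ j → Disjoint (P i) (P j)) (s : Finset ι) (N : Finset β) :
    #{j ∈ s | ¬ Disjoint N (P j)} ≤ #N := by
  refine card_le_card_of_forall_subsingleton (fun j k => k ∈ P j) (fun j hj => ?_) ?_
  · obtain ⟨k, hkN, hkP⟩ := not_disjoint_iff.1 (mem_filter.1 hj).2
    exact ⟨k, hkN, hkP⟩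
  · intro k _ i ⟨_, hi⟩ j ⟨_, hj⟩
    by_contra hij
    exact disjoint_left.1 (hP i j hij) hi hj

section BlockDNF

variable {n w : ℕ} {f : (Fin n → Bool) → Bool} {T : Fin w → Finset (Fin n) × Finset (Fin n)}

lemma exists_mem_term_of_bflip_ne (hf : ∀ x, f x = true ↔ ∃ i, TermTrue (T i) x)
    {x : Fin n → Bool} {k : Fin n} (hk : f (bflip x k) ≠ f x) : ∃ i, k ∈ (T i).1 ∪ (T i).2 := by
  by_contra! hnot
  refine hk (Bool.eq_iff_iff.2 ?_)
  rw [hf, hf]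
  refine exists_congr fun i => termTrue_congr fun j hj => ?_
  have hjk : j ≠ k := by rintro rfl; exact hnot i hj
  simp [bflip, hjk]

lemma le_mul_of_forall_card_add_card_le (hf : ∀ x, f x = true ↔ ∃ i, TermTrue (T i) x)
    (hdep : ∀ i : Fin n, ∃ x, f (bflip x i) ≠ f x) {d : ℕ}
    (hd : ∀ i, #(T i).1 + #(T i).2 ≤ d) : n ≤ w * d := by
  have hcover : (univ : Finset (Fin n)) ⊆ univ.biUnion fun i => (T i).1 ∪ (T i).2 := by
    intro k _
    obtain ⟨x, hx⟩ := hdep k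
    obtain ⟨i, hi⟩ := exists_mem_term_of_bflip_ne hf hx
    exact mem_biUnion.2 ⟨i, mem_univ i, hi⟩
  calc n = #(univ : Finset (Fin n)) := (card_fin n).symm
    _ ≤ ∑ i, #((T i).1 ∪ (T i).2) := (card_le_card hcover).trans card_biUnion_le
    _ ≤ ∑ _i : Fin w, d := sum_le_sum fun i _ => (card_union_le _ _).trans (hd i)
    _ = w * d := by simp

lemma nonempty_fst_of_eval_zero (hf : ∀ x, f x = true ↔ ∃ i, TermTrue (T i) x)
    (h0 : f (fun _ => false) = false) (i : Fin w) : (T i).1.Nonempty := by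
  rw [nonempty_iff_ne_empty]
  intro hempty
  have : f (fun _ => false) = true := (hf _).2 ⟨i, by simp [TermTrue, hempty]⟩
  simp [h0] at this

lemma eval_boolIndicator_fst (hterm : ∀ i, Disjoint (T i).1 (T i).2)
    (hf : ∀ x, f x = true ↔ ∃ i, TermTrue (T i) x) (i : Fin w) :
    f (boolIndicator (T i).1) = true :=
  (hf _).2 ⟨i, termTrue_boolIndicator_iff.2 ⟨subset_rfl, (hterm i).symm⟩⟩

lemma bflip_ne_of_mem_fst (hterm : ∀ i, Disjoint (T i).1 (T i).2)
    (hf : ∀ x, f x = true ↔ ∃ i, TermTrue (T i) x) (h0 : f (fun _ => false) = false)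
    (hblock : ∀ i j, i ≠ j → Disjoint (T i).1 (T j).1) {i : Fin w} {k : Fin n}
    (hk : k ∈ (T i).1) :
    f (bflip (boolIndicator (T i).1) k) ≠ f (boolIndicator (T i).1) := by
  rw [eval_boolIndicator_fst hterm hf i, bflip_boolIndicator_of_mem hk]
  intro h
  obtain ⟨j, hj⟩ := (hf _).1 h
  have hsub := (termTrue_boolIndicator_iff.1 hj).1
  by_cases hji : j = i
  · subst hji
    exact notMem_erase k _ (hsub hk)
  · obtain ⟨m, hm⟩ := nonempty_fst_of_eval_zero hf h0 j
    exact disjoint_left.1 (hblock j i hji) hm (erase_subset _ _ (hsub hm))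

/-- If flipping `k` keeps `f` on, the term that is then satisfied has positive set inside `{k}`,
by disjointness of the blocks, so it is satisfied at the indicator of `{k}`. -/
lemma bflip_ne_of_mem_snd (hterm : ∀ i, Disjoint (T i).1 (T i).2)
    (hf : ∀ x, f x = true ↔ ∃ i, TermTrue (T i) x) (h0 : f (fun _ => false) = false)
    (hblock : ∀ i j, i ≠ j → Disjoint (T i).1 (T j).1) {i : Fin w} {k : Fin n}
    (hk : k ∈ (T i).2) :
    f (bflip (boolIndicator (T i).1) k) ≠ f (boolIndicator (T i).1) ∨
      f (bflip (fun _ => false) k) ≠ f (fun _ => false) := by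
  rw [or_iff_not_imp_left, not_ne_iff]
  intro hstay
  rw [eval_boolIndicator_fst hterm hf i,
    bflip_boolIndicator_of_notMem (disjoint_right.1 (hterm i) hk)] at hstay
  obtain ⟨j, hj⟩ := (hf _).1 hstay
  obtain ⟨hPj, hNj⟩ := termTrue_boolIndicator_iff.1 hj
  have hji : j ≠ i := by
    rintro rfl
    exact disjoint_left.1 hNj hk (mem_insert_self _ _)
  have hPk : (T j).1 ⊆ {k} := fun m hm => by
    rcases mem_insert.1 (hPj hm) with rfl | hmi
    · exact mem_singleton_self _
    · exact absurd hmi (disjoint_left.1 (hblock j i hji) hm)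
  rw [h0, ← boolIndicator_empty, bflip_boolIndicator_of_notMem (notMem_empty k), insert_empty,
    ne_eq, Bool.not_eq_false]
  refine (hf _).2 ⟨j, termTrue_boolIndicator_iff.2 ⟨hPk, ?_⟩⟩
  exact hNj.mono_right (singleton_subset_iff.2 (mem_insert_self _ _))

lemma card_add_card_le_two_mul_sens (hterm : ∀ i, Disjoint (T i).1 (T i).2)
    (hf : ∀ x, f x = true ↔ ∃ i, TermTrue (T i) x) (h0 : f (fun _ => false) = false)
    (hblock : ∀ i j, i ≠ j → Disjoint (T i).1 (T j).1) (i : Fin w) :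
    #(T i).1 + #(T i).2 ≤ 2 * sens f := by
  set x := boolIndicator (T i).1
  have hsub : (T i).1 ∪ (T i).2 ⊆ ({k | f (bflip x k) ≠ f x} : Finset (Fin n)) ∪
      ({k | f (bflip (fun _ => false) k) ≠ f (fun _ => false)} : Finset (Fin n)) := by
    intro k hk
    simp only [mem_union, mem_filter, mem_univ, true_and]
    rcases mem_union.1 hk with hk | hk
    · exact .inl (bflip_ne_of_mem_fst hterm hf h0 hblock hk)
    · exact bflip_ne_of_mem_snd hterm hf h0 hblock hk
  calc #(T i).1 + #(T i).2 = #((T i).1 ∪ (T i).2) := (card_union_of_disjoint (hterm i)).symm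
    _ ≤ sensAt f x + sensAt f (fun _ => false) := (card_le_card hsub).trans (card_union_le _ _)
    _ ≤ 2 * sens f := by
      rw [two_mul]
      exact add_le_add (sensAt_le_sens f _) (sensAt_le_sens f _)

lemma card_le_sens_of_disjoint_snd_fst (hterm : ∀ i, Disjoint (T i).1 (T i).2)
    (hf : ∀ x, f x = true ↔ ∃ i, TermTrue (T i) x) (h0 : f (fun _ => false) = false)
    (hblock : ∀ i j, i ≠ j → Disjoint (T i).1 (T j).1) {M : Finset (Fin w)}
    (hM : ∀ i ∈ M, ∀ j ∈ M, i ≠ j → Disjoint (T i).2 (T j).1) : #M ≤ sens f := by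
  choose m hm using nonempty_fst_of_eval_zero hf h0
  set S := M.biUnion fun i => (T i).1.erase (m i)
  have hmS : ∀ j, m j ∉ S := by
    intro j hj
    obtain ⟨i, -, hji⟩ := mem_biUnion.1 hj
    obtain ⟨hne, hmi⟩ := mem_erase.1 hji
    by_cases hij : i = j
    · subst hij
      exact hne rfl
    · exact disjoint_left.1 (hblock i j hij) hmi (hm j)
  have hfS : f (boolIndicator S) = false := by
    rw [Bool.eq_false_iff]
    intro h
    obtain ⟨j, hj⟩ := (hf _).1 h
    exact hmS j ((termTrue_boolIndicator_iff.1 hj).1 (hm j))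
  have hsens : ∀ k ∈ M.image m, f (bflip (boolIndicator S) k) ≠ f (boolIndicator S) := by
    simp only [mem_image, forall_exists_index, and_imp, forall_apply_eq_imp_iff₂]
    intro i hi
    rw [hfS, bflip_boolIndicator_of_notMem (hmS i), ne_eq, Bool.not_eq_false]
    refine (hf _).2 ⟨i, termTrue_boolIndicator_iff.2 ⟨?_, ?_⟩⟩
    · intro k hk
      rw [mem_insert, or_iff_not_imp_left]
      exact fun hki => mem_biUnion.2 ⟨i, hi, mem_erase.2 ⟨hki, hk⟩⟩
    · rw [disjoint_insert_right, disjoint_biUnion_right]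
      refine ⟨disjoint_left.1 (hterm i) (hm i), fun i' hi' => ?_⟩
      rcases eq_or_ne i i' with rfl | hii'
      · exact (hterm i).symm.mono_right (erase_subset _ _)
      · exact (hM i hi i' hi' hii').mono_right (erase_subset _ _)
  have hinj : Set.InjOn m M := fun i _ j _ hij => by
    by_contra hne
    exact disjoint_left.1 (hblock i j hne) (hm i) (hij ▸ hm j)
  calc #M = #(M.image m) := (card_image_of_injOn hinj).symm
    _ ≤ sensAt f (boolIndicator S) := card_le_sensAt hsens
    _ ≤ sens f := sensAt_le_sens f _

end BlockDNF

lemma rpow_one_div_three_div_two_le {x y : ℝ} (hx : 0 ≤ x) (hy : 0 ≤ y) (h : x ≤ 8 * y ^ 3) :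
    x ^ ((1 : ℝ) / 3) / 2 ≤ y := by
  have hcube : x ^ ((1 : ℝ) / 3) ≤ 2 * y :=
    calc x ^ ((1 : ℝ) / 3) ≤ ((2 * y) ^ 3) ^ ((1 : ℝ) / 3) :=
          Real.rpow_le_rpow hx (by linarith) (by norm_num)
      _ = 2 * y := by
          rw [one_div]
          exact_mod_cast Real.pow_rpow_inv_natCast (by positivity) three_ne_zero
  linarith

theorem sens_ge_cbrt_general {n w : ℕ} (f : (Fin n → Bool) → Bool)
    (T : Fin w → Finset (Fin n) × Finset (Fin n))
    (hterm : ∀ i, Disjoint (T i).1 (T i).2)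
    (hf : ∀ x, f x = true ↔ ∃ i, TermTrue (T i) x)
    (h0 : f (fun _ => false) = false)
    (hblock : ∀ i j, i ≠ j → Disjoint (T i).1 (T j).1)
    (hdep : ∀ i : Fin n, ∃ x, f (bflip x i) ≠ f x) :
    (n : ℝ) ^ ((1 : ℝ) / 3) / 2 ≤ (sens f : ℝ) := by
  set s := sens f
  set d := univ.sup fun i => #(T i).1 + #(T i).2
  have hd : ∀ i, #(T i).1 + #(T i).2 ≤ d := fun i =>
    le_sup (f := fun i => #(T i).1 + #(T i).2) (mem_univ i)
  have hnd : n ≤ w * d := le_mul_of_forall_card_add_card_le hf hdep hd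
  have hds : d ≤ 2 * s :=
    Finset.sup_le fun i _ => card_add_card_le_two_mul_sens hterm hf h0 hblock i
  obtain ⟨M, -, hMind, hwM⟩ := exists_indep_card_le_mul (fun i j => ¬ Disjoint (T i).2 (T j).1)
    (k := d - 1) univ fun i => (card_filter_not_disjoint_le hblock _ _).trans <| by
      have := (nonempty_fst_of_eval_zero hf h0 i).card_pos
      have := hd i
      omega
  rw [card_univ, Fintype.card_fin] at hwM
  have hMs : #M ≤ s := card_le_sens_of_disjoint_snd_fst hterm hf h0 hblock
    fun i hi j hj hij => not_not.1 (hMind i hi j hj hij)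
  have hcube : n ≤ 8 * s ^ 3 := calc
    n ≤ (2 * (d - 1) + 1) * #M * d := hnd.trans (Nat.mul_le_mul_right d hwM)
    _ ≤ 2 * d * s * d := by
      rcases Nat.eq_zero_or_pos d with hd0 | hd0
      · simp [hd0]
      · gcongr; omega
    _ ≤ 2 * (2 * s) * s * (2 * s) := by gcongr
    _ = 8 * s ^ 3 := by ring
  exact rpow_one_div_three_div_two_le (Nat.cast_nonneg n) (Nat.cast_nonneg s)
    (by exact_mod_cast hcube)

theorem sens_ge_cbrt {n w : ℕ} (f : (Fin n → Bool) → Bool)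
    (T : Fin w → Finset (Fin n) × Finset (Fin n))
    (hterm : ∀ i, Disjoint (T i).1 (T i).2)
    (hf : ∀ x, f x = true ↔ ∃ i, TermTrue (T i) x)
    (h0 : f (fun _ => false) = false)
    (hnr : ∀ i, ∃ x, TermTrue (T i) x ∧ ∀ j, j ≠ i → ¬ TermTrue (T j) x)
    (hblock : ∀ i j, i ≠ j → Disjoint (T i).1 (T j).1)
    (hdep : ∀ i : Fin n, ∃ x, f (bflip x i) ≠ f x) :
    (n : ℝ) ^ ((1 : ℝ) / 3) / 2 ≤ (sens f : ℝ) :=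
  sens_ge_cbrt_general f T hterm hf h0 hblock hdep
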